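/- arXiv:2307.16390 — 2 statements merged into one kernel-verified Lean document; each statement's English description precedes it below -/
import Mathlib

section
/- For 0 < q < 1/2 and p = 1 - q, we have q²·[(1-p)·log(1-p) + (1+p)·log(1+p)] > p²·[(1-q)·log(1-q) + (1+q)·log(1+q)]. -/
open Real Set

/-!
With `φ u = (1 + u) log (1 + u) + (1 - u) log (1 - u)` the claim reads `φ q / q² < φ p / p²`
for `0 < q < p < 1`, so it suffices that `φ u / u²` is strictly increasing on `(0, 1)`.
Its derivative has the sign of `u L u - 2 φ u`, where `L u = log (1 + u) - log (1 - u) = φ' u`.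
This vanishes at `0` and has derivative `2u / (1 - u²) - L u`, which is positive because the
series `L u = ∑ 2 u^(2k+1) / (2k+1)` is termwise dominated by `∑ 2 u^(2k+1) = 2u / (1 - u²)`.
-/

lemma strictMonoOn_of_hasDerivAt_pos {D : Set ℝ} (hD : Convex ℝ D) {f f' : ℝ → ℝ}
    (hf : ∀ x ∈ D, HasDerivAt f (f' x) x) (hf' : ∀ x ∈ interior D, 0 < f' x) :
    StrictMonoOn f D :=
  strictMonoOn_of_deriv_pos hD (fun x hx ↦ (hf x hx).continuousAt.continuousWithinAt)
    fun x hx ↦ (hf x (interior_subset hx)).deriv ▸ hf' x hx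

lemma log_one_add_sub_log_one_sub_lt {u : ℝ} (h0 : 0 < u) (h1 : u < 1) :
    log (1 + u) - log (1 - u) < 2 * u / (1 - u ^ 2) := by
  have hlog := hasSum_log_sub_log_of_abs_lt_one (abs_lt.2 ⟨by linarith, h1⟩)
  have hgeom := (hasSum_geometric_of_lt_one (sq_nonneg u) (by nlinarith)).mul_left (2 * u)
  have hterm (k : ℕ) : u ^ (2 * k + 1) = u * (u ^ 2) ^ k := by ring
  refine hasSum_lt (i := 1) (fun k ↦ ?_) ?_ hlog hgeom
  · simp only [hterm]
    have hcoeff : 1 / (2 * (k : ℝ) + 1) ≤ 1 :=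
      div_le_one_of_le₀ (by linarith [k.cast_nonneg (α := ℝ)]) (by positivity)
    have hpow : 0 ≤ u * (u ^ 2) ^ k := by positivity
    nlinarith
  · norm_num
    nlinarith [pow_pos h0 3]

noncomputable def phi (u : ℝ) : ℝ := (1 + u) * log (1 + u) + (1 - u) * log (1 - u)

lemma hasDerivAt_log_one_add_sub_log_one_sub {u : ℝ} (h1 : -1 < u) (h2 : u < 1) :
    HasDerivAt (fun u ↦ log (1 + u) - log (1 - u)) (2 / (1 - u ^ 2)) u := by
  have h1' : 1 + u ≠ 0 := by linarith
  have h2' : 1 - u ≠ 0 := by linarith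
  have h3 : 1 - u ^ 2 ≠ 0 := by nlinarith
  have hplus := ((hasDerivAt_id' u).const_add 1).log h1'
  have hminus := ((hasDerivAt_id' u).const_sub 1).log h2'
  refine (hplus.sub hminus).congr_deriv ?_
  field_simp
  ring

lemma hasDerivAt_phi {u : ℝ} (h1 : -1 < u) (h2 : u < 1) :
    HasDerivAt phi (log (1 + u) - log (1 - u)) u := by
  have hplus := (hasDerivAt_mul_log (x := 1 + u) (by linarith)).comp u
    ((hasDerivAt_id' u).const_add 1)
  have hminus := (hasDerivAt_mul_log (x := 1 - u) (by linarith)).comp u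
    ((hasDerivAt_id' u).const_sub 1)
  exact (hplus.add hminus).congr_deriv (by ring)

lemma two_mul_phi_lt {u : ℝ} (h0 : 0 < u) (h1 : u < 1) :
    2 * phi u < u * (log (1 + u) - log (1 - u)) := by
  let b := fun u ↦ u * (log (1 + u) - log (1 - u)) - 2 * phi u
  have hb : StrictMonoOn b (Ico 0 1) := by
    refine strictMonoOn_of_hasDerivAt_pos (convex_Ico 0 1)
      (f' := fun x ↦ 2 * x / (1 - x ^ 2) - (log (1 + x) - log (1 - x))) (fun x hx ↦ ?_)
      fun x hx ↦ ?_
    · have hx1 : -1 < x := by linarith [hx.1]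
      exact (((hasDerivAt_id' x).mul (hasDerivAt_log_one_add_sub_log_one_sub hx1 hx.2)).sub
        ((hasDerivAt_phi hx1 hx.2).const_mul 2)).congr_deriv (by ring)
    · rw [interior_Ico] at hx
      exact sub_pos.2 (log_one_add_sub_log_one_sub_lt hx.1 hx.2)
  simpa [b, phi] using hb ⟨le_rfl, zero_lt_one⟩ ⟨h0.le, h1⟩ h0

lemma strictMonoOn_phi_div_sq : StrictMonoOn (fun u ↦ phi u / u ^ 2) (Ioo 0 1) := by
  refine strictMonoOn_of_hasDerivAt_pos (convex_Ioo 0 1)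
    (f' := fun x ↦ ((log (1 + x) - log (1 - x)) * x ^ 2 - phi x * (2 * x)) / (x ^ 2) ^ 2)
    (fun x hx ↦ ?_) fun x hx ↦ ?_
  · exact (hasDerivAt_phi (by linarith [hx.1]) hx.2).div
      ((hasDerivAt_pow 2 x).congr_deriv (by ring)) (by positivity [hx.1])
  · rw [interior_Ioo] at hx
    apply div_pos _ (by positivity [hx.1])
    nlinarith [two_mul_phi_lt hx.1 hx.2, hx.1]

theorem stmt1 (q p : ℝ) (hq : 0 < q) (hq2 : q < 1/2) (hp : p = 1 - q) :
    q^2 * ((1 - p) * Real.log (1 - p) + (1 + p) * Real.log (1 + p)) >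
      p^2 * ((1 - q) * Real.log (1 - q) + (1 + q) * Real.log (1 + q)) := by
  subst hp
  have h := strictMonoOn_phi_div_sq ⟨hq, by linarith⟩ ⟨by linarith, by linarith⟩
    (show q < 1 - q by linarith)
  rw [div_lt_div_iff₀ (by positivity) (by nlinarith)] at h
  simp only [phi, sub_sub_cancel] at h ⊢
  linarith
end

section
/- The function g(x) = ((2x-1)/x²)·log(1-x) is strictly convex on (0,1/2). -/
/-!
Writing `g(x) = (2x - 1) x⁻² log(1 - x)`, one computes
`g''(x) = N(x) / (x⁴ (1 - x)²)` with `N(x) = (4x - 6)(1 - x)² log(1 - x) - 4x(1 - x)² - (2x - 1)x²`.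
Since `4x - 6 < 0`, the crude bound `log(1 - x) ≤ -x` already gives
`N(x) ≥ x (1 - 2x) (2(1 - x)² + x)`, which is positive on `(0, 1/2)`.
-/

open Real Filter

lemma hasDerivAt_log_one_sub {x : ℝ} (hx : x ≠ 1) :
    HasDerivAt (fun t => log (1 - t)) (-1 / (1 - x)) x := by
  simpa using ((hasDerivAt_id x).const_sub 1).log (sub_ne_zero.mpr hx.symm)

lemma hasDerivAt_div_sq_mul_log_one_sub {x : ℝ} (hx₀ : x ≠ 0) (hx₁ : x ≠ 1) :
    HasDerivAt (fun t => (2 * t - 1) / t ^ 2 * log (1 - t))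
      (2 * (1 - x) / x ^ 3 * log (1 - x) - (2 * x - 1) / (x ^ 2 * (1 - x))) x := by
  have hnum : HasDerivAt (fun t : ℝ => 2 * t - 1) 2 x := by
    simpa using ((hasDerivAt_id x).const_mul 2).sub_const 1
  have hquot := hnum.fun_div (hasDerivAt_pow 2 x) (pow_ne_zero 2 hx₀)
  refine (hquot.fun_mul (hasDerivAt_log_one_sub hx₁)).congr_deriv ?_
  have : 1 - x ≠ 0 := sub_ne_zero.mpr hx₁.symm
  field_simp
  ring

lemma hasDerivAt_deriv_div_sq_mul_log_one_sub {x : ℝ} (hx₀ : x ≠ 0) (hx₁ : x ≠ 1) :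
    HasDerivAt (fun t => 2 * (1 - t) / t ^ 3 * log (1 - t) - (2 * t - 1) / (t ^ 2 * (1 - t)))
      ((4 * x - 6) / x ^ 4 * log (1 - x) - 4 / x ^ 3 - (2 * x - 1) / (x ^ 2 * (1 - x) ^ 2)) x := by
  have h1x : 1 - x ≠ 0 := sub_ne_zero.mpr hx₁.symm
  have hlin : HasDerivAt (fun t : ℝ => 2 * (1 - t)) (-2) x := by
    simpa using ((hasDerivAt_id x).const_sub 1).const_mul 2
  have hnum : HasDerivAt (fun t : ℝ => 2 * t - 1) 2 x := by
    simpa using ((hasDerivAt_id x).const_mul 2).sub_const 1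
  have hden : HasDerivAt (fun t : ℝ => t ^ 2 * (1 - t)) (2 * x * (1 - x) - x ^ 2) x := by
    refine ((hasDerivAt_pow 2 x).fun_mul ((hasDerivAt_id x).const_sub 1)).congr_deriv ?_
    simp only [id]
    ring
  have hleft := (hlin.fun_div (hasDerivAt_pow 3 x) (pow_ne_zero 3 hx₀)).fun_mul
    (hasDerivAt_log_one_sub hx₁)
  have hright := hnum.fun_div hden (mul_ne_zero (pow_ne_zero 2 hx₀) h1x)
  refine (hleft.fun_sub hright).congr_deriv ?_
  field_simp
  ring

lemma deriv_deriv_div_sq_mul_log_one_sub {x : ℝ} (hx₀ : x ≠ 0) (hx₁ : x ≠ 1) :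
    deriv (deriv fun t => (2 * t - 1) / t ^ 2 * log (1 - t)) x =
      ((4 * x - 6) * (1 - x) ^ 2 * log (1 - x) - 4 * x * (1 - x) ^ 2 - (2 * x - 1) * x ^ 2) /
        (x ^ 4 * (1 - x) ^ 2) := by
  have hderiv : deriv (fun t => (2 * t - 1) / t ^ 2 * log (1 - t)) =ᶠ[nhds x]
      fun t => 2 * (1 - t) / t ^ 3 * log (1 - t) - (2 * t - 1) / (t ^ 2 * (1 - t)) := by
    filter_upwards [eventually_ne_nhds hx₀, eventually_ne_nhds hx₁] with t ht₀ ht₁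
    exact (hasDerivAt_div_sq_mul_log_one_sub ht₀ ht₁).deriv
  rw [hderiv.deriv_eq, (hasDerivAt_deriv_div_sq_mul_log_one_sub hx₀ hx₁).deriv]
  have : 1 - x ≠ 0 := sub_ne_zero.mpr hx₁.symm
  field_simp

lemma log_one_sub_le_neg {x : ℝ} (hx : x < 1) : log (1 - x) ≤ -x := by
  linarith [log_le_sub_one_of_pos (sub_pos.mpr hx)]

lemma deriv_deriv_numerator_pos {x : ℝ} (hx₀ : 0 < x) (hx₁ : x < 1 / 2) :
    0 < (4 * x - 6) * (1 - x) ^ 2 * log (1 - x) - 4 * x * (1 - x) ^ 2 - (2 * x - 1) * x ^ 2 := by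
  have hlog : (6 - 4 * x) * (1 - x) ^ 2 * x ≤ (4 * x - 6) * (1 - x) ^ 2 * log (1 - x) := by
    have hcoef : (4 * x - 6) * (1 - x) ^ 2 ≤ 0 :=
      mul_nonpos_of_nonpos_of_nonneg (by linarith) (sq_nonneg _)
    linarith [mul_le_mul_of_nonpos_left (log_one_sub_le_neg (by linarith : x < 1)) hcoef]
  have hpoly : 0 < x * (1 - 2 * x) * (2 * (1 - x) ^ 2 + x) := by
    have : 0 < 1 - 2 * x := by linarith
    positivity
  linarith

theorem stmt11 (x : ℝ) (hx : x ∈ Set.Ioo (0:ℝ) (1/2)) :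
    0 < deriv (deriv (fun x : ℝ => ((2*x - 1) / x^2) * Real.log (1 - x))) x := by
  obtain ⟨hx₀, hx₁⟩ := hx
  rw [deriv_deriv_div_sq_mul_log_one_sub hx₀.ne' (by linarith)]
  have : 0 < 1 - x := by linarith
  exact div_pos (deriv_deriv_numerator_pos hx₀ hx₁) (by positivity)
end
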